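/- arXiv:2605.02473 — 4 statements merged into one kernel-verified Lean document; each statement's English description precedes it below -/
import Mathlib

section
/- If f = 2e, then the Lagrangian density L = -½ v_t v_x + ½ c v_xx² - ½ v_xxx² + ½ e v_x v_xx² - (g/12) v_x⁴ - ½ σ v_y² has Euler–Lagrange expression (with respect to v) equal to v_tx + c v_xxxx + v_xxxxxx + e v_x v_xxxx + 2e v_xx v_xxx + g v_x² v_xx + σ v_yy. Concretely, the Euler operator applied to L, i.e. -D_t(∂L/∂v_t) - D_x(∂L/∂v_x) - D_y(∂L/∂v_y) + D_x²(∂L/∂v_xx) - D_x³(∂L/∂v_xxx), evaluated on any smooth v(x,y,t), equals the left-hand side of the potential equation with f = 2e. -/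
noncomputable section

/-- Partial derivative with respect to the first variable `x`. -/
def px (u : ℝ → ℝ → ℝ → ℝ) : ℝ → ℝ → ℝ → ℝ :=
  fun x y t => deriv (fun x' => u x' y t) x

/-- Partial derivative with respect to the second variable `y`. -/
def py (u : ℝ → ℝ → ℝ → ℝ) : ℝ → ℝ → ℝ → ℝ :=
  fun x y t => deriv (fun y' => u x y' t) y

/-- Partial derivative with respect to the third variable `t`. -/
def pt (u : ℝ → ℝ → ℝ → ℝ) : ℝ → ℝ → ℝ → ℝ :=
  fun x y t => deriv (fun t' => u x y t') t

/-- `u(x,y,t)` is smooth (C^∞) as a function of the triple. -/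
def Smooth3 (u : ℝ → ℝ → ℝ → ℝ) : Prop :=
  ContDiff ℝ (⊤ : ℕ∞) (fun p : ℝ × ℝ × ℝ => u p.1 p.2.1 p.2.2)

/-- The expanded fifth-order KP expression with general dispersion coefficient `d`. -/
def Delta (c d e f g σ : ℝ) (u : ℝ → ℝ → ℝ → ℝ) : ℝ → ℝ → ℝ → ℝ :=
  fun x y t =>
    pt (px u) x y t + c * px (px (px (px u))) x y t
      + d * px (px (px (px (px (px u))))) x y t
      + (e + f) * px u x y t * px (px (px u)) x y t
      + e * u x y t * px (px (px (px u))) x y t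
      + f * (px (px u) x y t) ^ 2
      + 2 * g * u x y t * (px u x y t) ^ 2
      + g * (u x y t) ^ 2 * px (px u) x y t
      + σ * py (py u) x y t

/-- The flux `F` of equation (3.5). -/
def Fflux (c e f g : ℝ) (u : ℝ → ℝ → ℝ → ℝ) : ℝ → ℝ → ℝ → ℝ :=
  fun x y t =>
    c * px (px (px u)) x y t + px (px (px (px (px u)))) x y t
      + e * u x y t * px (px (px u)) x y t
      + f * px u x y t * px (px u) x y t
      + g * (u x y t) ^ 2 * px u x y t

/-- The potential `J` of equation (3.7), with `∂ₓ J = -F`. -/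
def Jpot (c e f g : ℝ) (u : ℝ → ℝ → ℝ → ℝ) : ℝ → ℝ → ℝ → ℝ :=
  fun x y t =>
    -(c * px (px u) x y t) - px (px (px (px u))) x y t
      - e * u x y t * px (px u) x y t
      + ((e - f) / 2) * (px u x y t) ^ 2
      - (g / 3) * (u x y t) ^ 3

namespace EL

def Fn (u : ℝ → ℝ → ℝ → ℝ) : ℝ × ℝ × ℝ → ℝ := fun p => u p.1 p.2.1 p.2.2

variable {u : ℝ → ℝ → ℝ → ℝ}

lemma slice_x (hu : Smooth3 u) (y t : ℝ) : ContDiff ℝ (⊤ : ℕ∞) (fun x => u x y t) := by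
  have h : ContDiff ℝ (⊤ : ℕ∞) (fun x : ℝ => ((x, y, t) : ℝ × ℝ × ℝ)) :=
    contDiff_id.prodMk contDiff_const
  exact hu.comp h

lemma hdx (hu : Smooth3 u) (x y t : ℝ) :
    HasDerivAt (fun x' => u x' y t) (px u x y t) x :=
  (((slice_x hu y t).differentiable (by simp)) x).hasDerivAt

lemma px_eq (hu : Smooth3 u) (x y t : ℝ) :
    px u x y t = fderiv ℝ (Fn u) (x, y, t) (1, 0, 0) := by
  have hF : HasFDerivAt (Fn u) (fderiv ℝ (Fn u) (x, y, t)) (x, y, t) :=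
    ((hu.differentiable (by simp)) _).hasFDerivAt
  have hγ : HasDerivAt (fun x' : ℝ => ((x', y, t) : ℝ × ℝ × ℝ)) ((1 : ℝ), (0 : ℝ), (0 : ℝ)) x :=
    (hasDerivAt_id x).prodMk (hasDerivAt_const x ((y, t) : ℝ × ℝ))
  exact (hF.comp_hasDerivAt x hγ).deriv

lemma py_eq (hu : Smooth3 u) (x y t : ℝ) :
    py u x y t = fderiv ℝ (Fn u) (x, y, t) (0, 1, 0) := by
  have hF : HasFDerivAt (Fn u) (fderiv ℝ (Fn u) (x, y, t)) (x, y, t) :=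
    ((hu.differentiable (by simp)) _).hasFDerivAt
  have hγ : HasDerivAt (fun y' : ℝ => ((x, y', t) : ℝ × ℝ × ℝ)) ((0 : ℝ), (1 : ℝ), (0 : ℝ)) y :=
    (hasDerivAt_const y x).prodMk ((hasDerivAt_id y).prodMk (hasDerivAt_const y t))
  exact (hF.comp_hasDerivAt y hγ).deriv

lemma pt_eq (hu : Smooth3 u) (x y t : ℝ) :
    pt u x y t = fderiv ℝ (Fn u) (x, y, t) (0, 0, 1) := by
  have hF : HasFDerivAt (Fn u) (fderiv ℝ (Fn u) (x, y, t)) (x, y, t) :=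
    ((hu.differentiable (by simp)) _).hasFDerivAt
  have hγ : HasDerivAt (fun t' : ℝ => ((x, y, t') : ℝ × ℝ × ℝ)) ((0 : ℝ), (0 : ℝ), (1 : ℝ)) t :=
    (hasDerivAt_const t x).prodMk ((hasDerivAt_const t y).prodMk (hasDerivAt_id t))
  exact (hF.comp_hasDerivAt t hγ).deriv

lemma smooth_dir (hu : Smooth3 u) (w : ℝ × ℝ × ℝ) :
    ContDiff ℝ (⊤ : ℕ∞) (fun p : ℝ × ℝ × ℝ => fderiv ℝ (Fn u) p w) :=
  (hu.fderiv_right (by simp)).clm_apply contDiff_const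

lemma smooth3_px (hu : Smooth3 u) : Smooth3 (px u) := by
  have h : (fun p : ℝ × ℝ × ℝ => px u p.1 p.2.1 p.2.2)
      = fun p => fderiv ℝ (Fn u) p (1, 0, 0) := funext fun p => px_eq hu p.1 p.2.1 p.2.2
  rw [Smooth3, h]; exact smooth_dir hu _
lemma smooth3_py (hu : Smooth3 u) : Smooth3 (py u) := by
  have h : (fun p : ℝ × ℝ × ℝ => py u p.1 p.2.1 p.2.2)
      = fun p => fderiv ℝ (Fn u) p (0, 1, 0) := funext fun p => py_eq hu p.1 p.2.1 p.2.2
  rw [Smooth3, h]; exact smooth_dir hu _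
lemma smooth3_pt (hu : Smooth3 u) : Smooth3 (pt u) := by
  have h : (fun p : ℝ × ℝ × ℝ => pt u p.1 p.2.1 p.2.2)
      = fun p => fderiv ℝ (Fn u) p (0, 0, 1) := funext fun p => pt_eq hu p.1 p.2.1 p.2.2
  rw [Smooth3, h]; exact smooth_dir hu _

lemma dir_dir (hu : Smooth3 u) (p : ℝ × ℝ × ℝ) (w v' : ℝ × ℝ × ℝ) :
    fderiv ℝ (fun q => fderiv ℝ (Fn u) q w) p v'
      = fderiv ℝ (fderiv ℝ (Fn u)) p v' w := by
  have hA : DifferentiableAt ℝ (fderiv ℝ (Fn u)) p :=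
    ((hu.fderiv_right (m := (⊤ : ℕ∞)) (by simp)).differentiable (by simp)) p
  rw [fderiv_clm_apply hA (differentiableAt_const w)]
  simp

lemma px_pt_comm (hu : Smooth3 u) (x y t : ℝ) :
    px (pt u) x y t = pt (px u) x y t := by
  have h1 : Fn (pt u) = fun p => fderiv ℝ (Fn u) p (0, 0, 1) :=
    funext fun p => pt_eq hu p.1 p.2.1 p.2.2
  have h2 : Fn (px u) = fun p => fderiv ℝ (Fn u) p (1, 0, 0) :=
    funext fun p => px_eq hu p.1 p.2.1 p.2.2
  have hsym : IsSymmSndFDerivAt ℝ (Fn u) (x, y, t) :=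
    hu.contDiffAt.isSymmSndFDerivAt (by rw [minSmoothness_of_isRCLikeNormedField]; exact WithTop.coe_le_coe.mpr (le_top : (2 : ℕ∞) ≤ ⊤))
  rw [px_eq (smooth3_pt hu), pt_eq (smooth3_px hu), h1, h2,
    dir_dir hu _ _ _, dir_dir hu _ _ _]
  exact hsym.eq _ _

end EL

/-- on the variational submanifold `f = 2e`, the Euler–Lagrange
expression of the Lagrangian density (2.9) equals the potential equation (2.8). -/
theorem euler_lagrange_of_lagrangian
    (c e f g σ : ℝ) (hf : f = 2 * e)
    (v : ℝ → ℝ → ℝ → ℝ) (hv : Smooth3 v) :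
    ∀ x y t : ℝ,
      -(pt (fun x' y' t' => -(1 / 2) * px v x' y' t') x y t)
        - px (fun x' y' t' =>
            -(1 / 2) * pt v x' y' t'
              + (1 / 2) * e * (px (px v) x' y' t') ^ 2
              - (g / 3) * (px v x' y' t') ^ 3) x y t
        - py (fun x' y' t' => -(σ * py v x' y' t')) x y t
        + px (px (fun x' y' t' =>
            c * px (px v) x' y' t'
              + e * px v x' y' t' * px (px v) x' y' t')) x y t
        - px (px (px (fun x' y' t' => -(px (px (px v)) x' y' t')))) x y t
      = pt (px v) x y t + c * px (px (px (px v))) x y t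
          + px (px (px (px (px (px v))))) x y t
          + e * px v x y t * px (px (px (px v))) x y t
          + f * px (px v) x y t * px (px (px v)) x y t
          + g * (px v x y t) ^ 2 * px (px v) x y t
          + σ * py (py v) x y t := by
  subst hf
  have h1 : Smooth3 (px v) := EL.smooth3_px hv
  have h2 : Smooth3 (px (px v)) := EL.smooth3_px h1
  have h3 : Smooth3 (px (px (px v))) := EL.smooth3_px h2
  have ht : Smooth3 (pt v) := EL.smooth3_pt hv
  have hy1 : Smooth3 (py v) := EL.smooth3_py hv
  intro x y t
  -- Term A
  have eA : pt (fun x' y' t' => -(1 / 2) * px v x' y' t') x y t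
      = -(1 / 2) * pt (px v) x y t := deriv_const_mul_field _
  -- Term B
  have eB : px (fun x' y' t' =>
        -(1 / 2) * pt v x' y' t'
          + (1 / 2) * e * (px (px v) x' y' t') ^ 2
          - (g / 3) * (px v x' y' t') ^ 3) x y t
      = -(1 / 2) * px (pt v) x y t
          + (1 / 2) * e * (((2 : ℕ) : ℝ) * px (px v) x y t ^ 1 * px (px (px v)) x y t)
          - (g / 3) * (((3 : ℕ) : ℝ) * px v x y t ^ 2 * px (px v) x y t) := by
    exact ((((EL.hdx ht x y t).const_mul (-(1 / 2))).add
        (((EL.hdx h2 x y t).pow 2).const_mul ((1 / 2) * e))).sub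
        (((EL.hdx h1 x y t).pow 3).const_mul (g / 3))).deriv
  -- Term C
  have eC : py (fun x' y' t' => -(σ * py v x' y' t')) x y t
      = -(σ * py (py v) x y t) := by
    show deriv (fun y' => -(σ * py v x y' t)) y = _
    rw [deriv.fun_neg, deriv_const_mul_field]
    rfl
  -- Term D, inner derivative as a function identity
  have hG : px (fun x' y' t' =>
        c * px (px v) x' y' t' + e * px v x' y' t' * px (px v) x' y' t')
      = fun x' y' t' =>
        c * px (px (px v)) x' y' t'
          + (e * px (px v) x' y' t' * px (px v) x' y' t'
              + e * px v x' y' t' * px (px (px v)) x' y' t') := by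
    funext a b s
    exact (((EL.hdx h2 a b s).const_mul c).add
      (((EL.hdx h1 a b s).const_mul e).mul (EL.hdx h2 a b s))).deriv
  have eD : px (fun x' y' t' =>
        c * px (px (px v)) x' y' t'
          + (e * px (px v) x' y' t' * px (px v) x' y' t'
              + e * px v x' y' t' * px (px (px v)) x' y' t')) x y t
      = c * px (px (px (px v))) x y t
          + ((e * px (px (px v)) x y t * px (px v) x y t
                + e * px (px v) x y t * px (px (px v)) x y t)
              + (e * px (px v) x y t * px (px (px v)) x y t
                + e * px v x y t * px (px (px (px v))) x y t)) := by
    exact (((EL.hdx h3 x y t).const_mul c).add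
      ((((EL.hdx h2 x y t).const_mul e).mul (EL.hdx h2 x y t)).add
        (((EL.hdx h1 x y t).const_mul e).mul (EL.hdx h3 x y t)))).deriv
  -- negation passes through px
  have hneg : ∀ w : ℝ → ℝ → ℝ → ℝ,
      px (fun x' y' t' => -(w x' y' t')) = fun x' y' t' => -(px w x' y' t') := by
    intro w; funext a b s; exact deriv.fun_neg
  have hcomm : px (pt v) x y t = pt (px v) x y t := EL.px_pt_comm hv x y t
  rw [eA, eB, eC, hG, eD, hneg, hneg, hneg, hcomm]
  push_cast
  ring
end
end

section
/- Let Q(x,y,t) be smooth and satisfy Q_xx = 0 and Q_xt + σ Q_yy = 0. Define T = Q u_x, X = Q F + Q_x J - Q_t u, Y = σ Q u_y - σ Q_y u, where F and J are as in the paper. Then for every smooth u(x,y,t), ∂_t T + ∂_x X + ∂_y Y = Q · Δ, where Δ = u_tx + c u_xxxx + u_xxxxxx + (e+f) u_x u_xxx + e u u_xxxx + f u_xx² + 2g u u_x² + g u² u_xx + σ u_yy. In particular, (T,X,Y) is a conserved vector: on solutions Δ = 0, it satisfies the continuity equation D_t T + D_x X + D_y Y = 0. -/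
noncomputable section

section ConservedVectorAux

variable {u v : ℝ → ℝ → ℝ → ℝ}

lemma Smooth3.diffx (hu : Smooth3 u) (y t : ℝ) : Differentiable ℝ fun x => u x y t := by
  have h : (fun x => u x y t)
      = (fun p : ℝ × ℝ × ℝ => u p.1 p.2.1 p.2.2) ∘ fun x => (x, y, t) := rfl
  rw [h]
  exact (hu.comp (contDiff_id.prodMk contDiff_const)).differentiable (by simp)

lemma Smooth3.diffy (hu : Smooth3 u) (x t : ℝ) : Differentiable ℝ fun y => u x y t := by
  have h : (fun y => u x y t)
      = (fun p : ℝ × ℝ × ℝ => u p.1 p.2.1 p.2.2) ∘ fun y => (x, y, t) := rfl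
  rw [h]
  exact (hu.comp (contDiff_const.prodMk (contDiff_id.prodMk contDiff_const))).differentiable (by simp)

lemma Smooth3.difft (hu : Smooth3 u) (x y : ℝ) : Differentiable ℝ fun t => u x y t := by
  have h : (fun t => u x y t)
      = (fun p : ℝ × ℝ × ℝ => u p.1 p.2.1 p.2.2) ∘ fun t => (x, y, t) := rfl
  rw [h]
  exact (hu.comp (contDiff_const.prodMk (contDiff_const.prodMk contDiff_id))).differentiable (by simp)

lemma hasDerivX (hu : Smooth3 u) (x y t : ℝ) :
    HasDerivAt (fun x' => u x' y t)
      (fderiv ℝ (fun p : ℝ × ℝ × ℝ => u p.1 p.2.1 p.2.2) (x, y, t) (1, 0, 0)) x := by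
  have hF := ((hu.differentiable (by simp)) (x, y, t)).hasFDerivAt
  have hl : HasDerivAt (fun s : ℝ => (s, y, t)) ((1 : ℝ), (0 : ℝ), (0 : ℝ)) x := by
    exact (hasDerivAt_id x).prodMk (hasDerivAt_const x (y, t))
  exact hF.comp_hasDerivAt x hl

lemma hasDerivY (hu : Smooth3 u) (x y t : ℝ) :
    HasDerivAt (fun y' => u x y' t)
      (fderiv ℝ (fun p : ℝ × ℝ × ℝ => u p.1 p.2.1 p.2.2) (x, y, t) (0, 1, 0)) y := by
  have hF := ((hu.differentiable (by simp)) (x, y, t)).hasFDerivAt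
  have hl : HasDerivAt (fun s : ℝ => (x, s, t)) ((0 : ℝ), (1 : ℝ), (0 : ℝ)) y := by
    simpa using (hasDerivAt_const y x).prodMk ((hasDerivAt_id y).prodMk (hasDerivAt_const y t))
  exact hF.comp_hasDerivAt y hl

lemma hasDerivT (hu : Smooth3 u) (x y t : ℝ) :
    HasDerivAt (fun t' => u x y t')
      (fderiv ℝ (fun p : ℝ × ℝ × ℝ => u p.1 p.2.1 p.2.2) (x, y, t) (0, 0, 1)) t := by
  have hF := ((hu.differentiable (by simp)) (x, y, t)).hasFDerivAt
  have hl : HasDerivAt (fun s : ℝ => (x, y, s)) ((0 : ℝ), (0 : ℝ), (1 : ℝ)) t := by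
    simpa using (hasDerivAt_const t x).prodMk ((hasDerivAt_const t y).prodMk (hasDerivAt_id t))
  exact hF.comp_hasDerivAt t hl

lemma px_repr (hu : Smooth3 u) (x y t : ℝ) :
    px u x y t = fderiv ℝ (fun p : ℝ × ℝ × ℝ => u p.1 p.2.1 p.2.2) (x, y, t) (1, 0, 0) :=
  (hasDerivX hu x y t).deriv

lemma py_repr (hu : Smooth3 u) (x y t : ℝ) :
    py u x y t = fderiv ℝ (fun p : ℝ × ℝ × ℝ => u p.1 p.2.1 p.2.2) (x, y, t) (0, 1, 0) :=
  (hasDerivY hu x y t).deriv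

lemma pt_repr (hu : Smooth3 u) (x y t : ℝ) :
    pt u x y t = fderiv ℝ (fun p : ℝ × ℝ × ℝ => u p.1 p.2.1 p.2.2) (x, y, t) (0, 0, 1) :=
  (hasDerivT hu x y t).deriv

lemma Smooth3.pxS (hu : Smooth3 u) : Smooth3 (px u) := by
  have h : (fun p : ℝ × ℝ × ℝ => px u p.1 p.2.1 p.2.2)
      = fun p : ℝ × ℝ × ℝ =>
          fderiv ℝ (fun q : ℝ × ℝ × ℝ => u q.1 q.2.1 q.2.2) p (1, 0, 0) := by
    funext p; obtain ⟨a, b, c⟩ := p; exact px_repr hu a b c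
  unfold Smooth3
  rw [h]
  exact (hu.fderiv_right (by simp)).clm_apply contDiff_const

lemma Smooth3.pyS (hu : Smooth3 u) : Smooth3 (py u) := by
  have h : (fun p : ℝ × ℝ × ℝ => py u p.1 p.2.1 p.2.2)
      = fun p : ℝ × ℝ × ℝ =>
          fderiv ℝ (fun q : ℝ × ℝ × ℝ => u q.1 q.2.1 q.2.2) p (0, 1, 0) := by
    funext p; obtain ⟨a, b, c⟩ := p; exact py_repr hu a b c
  unfold Smooth3
  rw [h]
  exact (hu.fderiv_right (by simp)).clm_apply contDiff_const

lemma Smooth3.ptS (hu : Smooth3 u) : Smooth3 (pt u) := by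
  have h : (fun p : ℝ × ℝ × ℝ => pt u p.1 p.2.1 p.2.2)
      = fun p : ℝ × ℝ × ℝ =>
          fderiv ℝ (fun q : ℝ × ℝ × ℝ => u q.1 q.2.1 q.2.2) p (0, 0, 1) := by
    funext p; obtain ⟨a, b, c⟩ := p; exact pt_repr hu a b c
  unfold Smooth3
  rw [h]
  exact (hu.fderiv_right (by simp)).clm_apply contDiff_const

lemma second_comm (hu : Smooth3 u) (x y t : ℝ) (v w : ℝ × ℝ × ℝ) :
    fderiv ℝ (fun p => fderiv ℝ (fun q : ℝ × ℝ × ℝ => u q.1 q.2.1 q.2.2) p v) (x, y, t) w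
      = fderiv ℝ (fun p => fderiv ℝ (fun q : ℝ × ℝ × ℝ => u q.1 q.2.1 q.2.2) p w) (x, y, t) v := by
  set F := fun q : ℝ × ℝ × ℝ => u q.1 q.2.1 q.2.2 with hF
  have hFc : ContDiff ℝ (⊤ : ℕ∞) F := hu
  have hD : Differentiable ℝ (fderiv ℝ F) := (hFc.fderiv_right (m := 1) (WithTop.coe_le_coe.mpr le_top)).differentiable one_ne_zero
  have key : ∀ a b : ℝ × ℝ × ℝ,
      fderiv ℝ (fun p => fderiv ℝ F p a) (x, y, t) b
        = fderiv ℝ (fderiv ℝ F) (x, y, t) b a := by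
    intro a b
    rw [fderiv_clm_apply (hD (x, y, t)) (differentiableAt_const a)]
    simp
  have symm : IsSymmSndFDerivAt ℝ F (x, y, t) :=
    hFc.contDiffAt.isSymmSndFDerivAt (by simp only [minSmoothness_of_isRCLikeNormedField]; exact WithTop.coe_le_coe.mpr (le_top : (2 : ℕ∞) ≤ ⊤))
  rw [key v w, key w v, symm w v]

lemma comm_pt_px (hu : Smooth3 u) (x y t : ℝ) :
    pt (px u) x y t = px (pt u) x y t := by
  have h1 : (fun p : ℝ × ℝ × ℝ => px u p.1 p.2.1 p.2.2)
      = fun p : ℝ × ℝ × ℝ =>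
          fderiv ℝ (fun q : ℝ × ℝ × ℝ => u q.1 q.2.1 q.2.2) p (1, 0, 0) := by
    funext p; obtain ⟨a, b, c⟩ := p; exact px_repr hu a b c
  have h2 : (fun p : ℝ × ℝ × ℝ => pt u p.1 p.2.1 p.2.2)
      = fun p : ℝ × ℝ × ℝ =>
          fderiv ℝ (fun q : ℝ × ℝ × ℝ => u q.1 q.2.1 q.2.2) p (0, 0, 1) := by
    funext p; obtain ⟨a, b, c⟩ := p; exact pt_repr hu a b c
  rw [pt_repr hu.pxS x y t, px_repr hu.ptS x y t, h1, h2, second_comm hu]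

/-! Arithmetic closure of smoothness. -/

lemma Smooth3.addS (ha : Smooth3 u) (hb : Smooth3 v) :
    Smooth3 (fun x y t => u x y t + v x y t) := ContDiff.add ha hb

lemma Smooth3.subS (ha : Smooth3 u) (hb : Smooth3 v) :
    Smooth3 (fun x y t => u x y t - v x y t) := ContDiff.sub ha hb

lemma Smooth3.mulS (ha : Smooth3 u) (hb : Smooth3 v) :
    Smooth3 (fun x y t => u x y t * v x y t) := ContDiff.mul ha hb

lemma Smooth3.negS (ha : Smooth3 u) :
    Smooth3 (fun x y t => -(u x y t)) := ContDiff.neg ha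

lemma Smooth3.constMulS (k : ℝ) (ha : Smooth3 u) :
    Smooth3 (fun x y t => k * u x y t) := ContDiff.mul contDiff_const ha

lemma Smooth3.powS (ha : Smooth3 u) (n : ℕ) :
    Smooth3 (fun x y t => u x y t ^ n) := ContDiff.pow ha n

/-! Pointwise derivative rules. -/

lemma px_add (ha : Smooth3 u) (hb : Smooth3 v) (x y t : ℝ) :
    px (fun x y t => u x y t + v x y t) x y t = px u x y t + px v x y t :=
  deriv_add (ha.diffx y t x) (hb.diffx y t x)

lemma px_sub (ha : Smooth3 u) (hb : Smooth3 v) (x y t : ℝ) :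
    px (fun x y t => u x y t - v x y t) x y t = px u x y t - px v x y t :=
  deriv_sub (ha.diffx y t x) (hb.diffx y t x)

lemma px_mul (ha : Smooth3 u) (hb : Smooth3 v) (x y t : ℝ) :
    px (fun x y t => u x y t * v x y t) x y t
      = px u x y t * v x y t + u x y t * px v x y t :=
  deriv_mul (ha.diffx y t x) (hb.diffx y t x)

lemma px_neg (x y t : ℝ) :
    px (fun x y t => -(u x y t)) x y t = -(px u x y t) := deriv.neg

lemma px_const_mul (k : ℝ) (x y t : ℝ) :
    px (fun x y t => k * u x y t) x y t = k * px u x y t := deriv_const_mul_field k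

lemma px_pow (ha : Smooth3 u) (n : ℕ) (x y t : ℝ) :
    px (fun x y t => u x y t ^ n) x y t = n * u x y t ^ (n - 1) * px u x y t :=
  deriv_fun_pow (ha.diffx y t x) n

lemma pt_mul (ha : Smooth3 u) (hb : Smooth3 v) (x y t : ℝ) :
    pt (fun x y t => u x y t * v x y t) x y t
      = pt u x y t * v x y t + u x y t * pt v x y t :=
  deriv_mul (ha.difft x y t) (hb.difft x y t)

lemma py_sub (ha : Smooth3 u) (hb : Smooth3 v) (x y t : ℝ) :
    py (fun x y t => u x y t - v x y t) x y t = py u x y t - py v x y t :=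
  deriv_sub (ha.diffy x t y) (hb.diffy x t y)

lemma py_mul (ha : Smooth3 u) (hb : Smooth3 v) (x y t : ℝ) :
    py (fun x y t => u x y t * v x y t) x y t
      = py u x y t * v x y t + u x y t * py v x y t :=
  deriv_mul (ha.diffy x t y) (hb.diffy x t y)

lemma py_const_mul (k : ℝ) (x y t : ℝ) :
    py (fun x y t => k * u x y t) x y t = k * py u x y t := deriv_const_mul_field k

variable {c e f g : ℝ}

lemma smooth3_Fflux (hu : Smooth3 u) : Smooth3 (Fflux c e f g u) := by
  have h1 := hu.pxS; have h2 := h1.pxS; have h3 := h2.pxS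
  have h4 := h3.pxS; have h5 := h4.pxS
  unfold Fflux
  exact ((((Smooth3.constMulS c h3).addS h5).addS
      ((Smooth3.constMulS e hu).mulS h3)).addS
      ((Smooth3.constMulS f h1).mulS h2)).addS
      ((Smooth3.constMulS g (hu.powS 2)).mulS h1)

lemma smooth3_Jpot (hu : Smooth3 u) : Smooth3 (Jpot c e f g u) := by
  have h1 := hu.pxS; have h2 := h1.pxS; have h3 := h2.pxS; have h4 := h3.pxS
  unfold Jpot
  exact (((((Smooth3.constMulS c h2).negS).subS h4).subS
      ((Smooth3.constMulS e hu).mulS h2)).addS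
      (Smooth3.constMulS ((e - f) / 2) (h1.powS 2))).subS
      (Smooth3.constMulS (g / 3) (hu.powS 3))

lemma px_Fflux (hu : Smooth3 u) (x y t : ℝ) :
    px (Fflux c e f g u) x y t
      = c * px (px (px (px u))) x y t
        + px (px (px (px (px (px u))))) x y t
        + (e + f) * px u x y t * px (px (px u)) x y t
        + e * u x y t * px (px (px (px u))) x y t
        + f * (px (px u) x y t) ^ 2
        + 2 * g * u x y t * (px u x y t) ^ 2
        + g * (u x y t) ^ 2 * px (px u) x y t := by
  have h1 := hu.pxS; have h2 := h1.pxS; have h3 := h2.pxS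
  have h4 := h3.pxS; have h5 := h4.pxS
  unfold Fflux
  rw [px_add (((((Smooth3.constMulS c h3).addS h5).addS
        ((Smooth3.constMulS e hu).mulS h3)).addS
        ((Smooth3.constMulS f h1).mulS h2)))
      ((Smooth3.constMulS g (hu.powS 2)).mulS h1),
    px_add ((((Smooth3.constMulS c h3).addS h5).addS
        ((Smooth3.constMulS e hu).mulS h3)))
      ((Smooth3.constMulS f h1).mulS h2),
    px_add (((Smooth3.constMulS c h3).addS h5))
      ((Smooth3.constMulS e hu).mulS h3),
    px_add (Smooth3.constMulS c h3) h5,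
    px_const_mul, px_mul (Smooth3.constMulS e hu) h3,
    px_mul (Smooth3.constMulS f h1) h2,
    px_mul (Smooth3.constMulS g (hu.powS 2)) h1,
    px_const_mul, px_const_mul, px_const_mul, px_pow hu 2]
  ring

lemma px_Jpot (hu : Smooth3 u) (x y t : ℝ) :
    px (Jpot c e f g u) x y t = -(Fflux c e f g u x y t) := by
  have h1 := hu.pxS; have h2 := h1.pxS; have h3 := h2.pxS; have h4 := h3.pxS
  unfold Jpot Fflux
  rw [px_sub ((((((Smooth3.constMulS c h2).negS).subS h4).subS
        ((Smooth3.constMulS e hu).mulS h2)).addS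
        (Smooth3.constMulS ((e - f) / 2) (h1.powS 2))))
      (Smooth3.constMulS (g / 3) (hu.powS 3)),
    px_add (((((Smooth3.constMulS c h2).negS).subS h4).subS
        ((Smooth3.constMulS e hu).mulS h2)))
      (Smooth3.constMulS ((e - f) / 2) (h1.powS 2)),
    px_sub ((((Smooth3.constMulS c h2).negS).subS h4))
      ((Smooth3.constMulS e hu).mulS h2),
    px_sub ((Smooth3.constMulS c h2).negS) h4,
    px_neg, px_const_mul, px_mul (Smooth3.constMulS e hu) h2,
    px_const_mul, px_const_mul, px_const_mul, px_pow h1 2, px_pow hu 3]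
  ring

end ConservedVectorAux

/-- Proposition 3.2 — every zeroth-order multiplier `Q(x,y,t)` with
`Q_xx = 0` and `Q_xt + σ Q_yy = 0` yields the conserved vector (3.10). -/
theorem conserved_vector_zeroth_order
    (c e f g σ : ℝ)
    (Q : ℝ → ℝ → ℝ → ℝ) (hQ : Smooth3 Q)
    (hQxx : ∀ x y t : ℝ, px (px Q) x y t = 0)
    (hQxt : ∀ x y t : ℝ, pt (px Q) x y t + σ * py (py Q) x y t = 0)
    (u : ℝ → ℝ → ℝ → ℝ) (hu : Smooth3 u) :
    ∀ x y t : ℝ,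
      pt (fun x' y' t' => Q x' y' t' * px u x' y' t') x y t
        + px (fun x' y' t' =>
            Q x' y' t' * Fflux c e f g u x' y' t'
              + px Q x' y' t' * Jpot c e f g u x' y' t'
              - pt Q x' y' t' * u x' y' t') x y t
        + py (fun x' y' t' =>
            σ * Q x' y' t' * py u x' y' t'
              - σ * py Q x' y' t' * u x' y' t') x y t
      = Q x y t * Delta c 1 e f g σ u x y t := by
  intro x y t
  have hQx := hQ.pxS; have hQt := hQ.ptS; have hQy := hQ.pyS
  have hu1 := hu.pxS
  have hF : Smooth3 (Fflux c e f g u) := smooth3_Fflux hu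
  have hJ : Smooth3 (Jpot c e f g u) := smooth3_Jpot hu
  have hQ2 : px (pt Q) x y t = -(σ * py (py Q) x y t) := by
    have h := hQxt x y t
    rw [comm_pt_px hQ] at h
    linarith
  rw [pt_mul hQ hu1,
    px_sub ((hQ.mulS hF).addS (hQx.mulS hJ)) (hQt.mulS hu),
    px_add (hQ.mulS hF) (hQx.mulS hJ),
    px_mul hQ hF, px_mul hQx hJ, px_mul hQt hu,
    py_sub ((Smooth3.constMulS σ hQ).mulS hu.pyS) ((Smooth3.constMulS σ hQy).mulS hu),
    py_mul (Smooth3.constMulS σ hQ) hu.pyS,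
    py_mul (Smooth3.constMulS σ hQy) hu,
    py_const_mul, py_const_mul,
    px_Fflux hu, px_Jpot hu,
    hQxx, hQ2]
  unfold Delta Fflux
  ring
end
end

section
/- For Q₂ = x, the conserved vector T = x u_x, X = x F + J, Y = σ x u_y satisfies ∂_t T + ∂_x X + ∂_y Y = x Δ for every smooth u(x,y,t), where Δ is the expanded fifth-order KP expression. In particular, on solutions of the equation, ∂_t(x u_x) + ∂_x(x F + J) + ∂_y(σ x u_y) = 0. -/
noncomputable section

/-- Auxiliary: smoothness is preserved by the partial `x`-derivative. -/
theorem Smooth3.pxs {u : ℝ → ℝ → ℝ → ℝ} (hu : Smooth3 u) : Smooth3 (px u) := by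
  have hfd : ContDiff ℝ (⊤ : ℕ∞) (fun p : ℝ × ℝ × ℝ =>
      fderiv ℝ (fun q : ℝ × ℝ × ℝ => u q.1 q.2.1 q.2.2) p ((1:ℝ), (0:ℝ), (0:ℝ))) :=
    (ContinuousLinearMap.apply ℝ ℝ ((1:ℝ), (0:ℝ), (0:ℝ))).contDiff.comp
      (hu.fderiv_right (by simp))
  have heq : ∀ p : ℝ × ℝ × ℝ, px u p.1 p.2.1 p.2.2 =
      fderiv ℝ (fun q : ℝ × ℝ × ℝ => u q.1 q.2.1 q.2.2) p ((1:ℝ), (0:ℝ), (0:ℝ)) := by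
    intro p
    have hU : HasFDerivAt (fun q : ℝ × ℝ × ℝ => u q.1 q.2.1 q.2.2)
        (fderiv ℝ (fun q : ℝ × ℝ × ℝ => u q.1 q.2.1 q.2.2) p) p :=
      (hu.differentiable (by simp) p).hasFDerivAt
    have hinner : HasDerivAt (fun x' : ℝ => ((x', p.2.1, p.2.2) : ℝ × ℝ × ℝ))
        ((1:ℝ), (0:ℝ), (0:ℝ)) p.1 :=
      (hasDerivAt_id p.1).prodMk (hasDerivAt_const p.1 (p.2.1, p.2.2))
    exact (hU.comp_hasDerivAt p.1 hinner).deriv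
  have hE : (fun p : ℝ × ℝ × ℝ => px u p.1 p.2.1 p.2.2) = fun p : ℝ × ℝ × ℝ =>
      fderiv ℝ (fun q : ℝ × ℝ × ℝ => u q.1 q.2.1 q.2.2) p ((1:ℝ), (0:ℝ), (0:ℝ)) :=
    funext heq
  unfold Smooth3
  rw [hE]
  exact hfd

/-- Auxiliary: a smooth function is differentiable in the `x` variable. -/
theorem Smooth3.diffX {u : ℝ → ℝ → ℝ → ℝ} (hu : Smooth3 u) (x y t : ℝ) :
    DifferentiableAt ℝ (fun x' => u x' y t) x := by
  have h : ContDiff ℝ (⊤ : ℕ∞) ((fun p : ℝ × ℝ × ℝ => u p.1 p.2.1 p.2.2) ∘ fun x' : ℝ => (x', y, t)) :=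
    hu.comp (contDiff_id.prodMk contDiff_const)
  exact (h.differentiable (by simp)) x

/-- Auxiliary: `HasDerivAt` in the `x` variable with derivative `px`. -/
theorem Smooth3.hd {u : ℝ → ℝ → ℝ → ℝ} (hu : Smooth3 u) (x y t : ℝ) :
    HasDerivAt (fun x' => u x' y t) (px u x y t) x :=
  (hu.diffX x y t).hasDerivAt

/-- conserved vector (3.13) for the multiplier `Q₂ = x`. -/
theorem conserved_vector_Q2
    (c e f g σ : ℝ) (u : ℝ → ℝ → ℝ → ℝ) (hu : Smooth3 u) :
    (∀ x y t : ℝ,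
      pt (fun x' y' t' => x' * px u x' y' t') x y t
        + px (fun x' y' t' =>
            x' * Fflux c e f g u x' y' t' + Jpot c e f g u x' y' t') x y t
        + py (fun x' y' t' => σ * x' * py u x' y' t') x y t
      = x * Delta c 1 e f g σ u x y t)
    ∧ (∀ x y t : ℝ, Delta c 1 e f g σ u x y t = 0 →
      pt (fun x' y' t' => x' * px u x' y' t') x y t
        + px (fun x' y' t' =>
            x' * Fflux c e f g u x' y' t' + Jpot c e f g u x' y' t') x y t
        + py (fun x' y' t' => σ * x' * py u x' y' t') x y t = 0) := by
  -- smoothness of iterated derivatives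
  have h0 := hu
  have h1 := h0.pxs
  have h2 := h1.pxs
  have h3 := h2.pxs
  have h4 := h3.pxs
  have h5 := h4.pxs
  have key : ∀ x y t : ℝ,
      pt (fun x' y' t' => x' * px u x' y' t') x y t
        + px (fun x' y' t' =>
            x' * Fflux c e f g u x' y' t' + Jpot c e f g u x' y' t') x y t
        + py (fun x' y' t' => σ * x' * py u x' y' t') x y t
      = x * Delta c 1 e f g σ u x y t := by
    intro x y t
    -- the t-derivative term
    have ht : pt (fun x' y' t' => x' * px u x' y' t') x y t
        = x * pt (px u) x y t := by
      show deriv (fun t' => x * px u x y t') t = x * pt (px u) x y t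
      rw [deriv_const_mul_field]
      rfl
    -- the y-derivative term
    have hy : py (fun x' y' t' => σ * x' * py u x' y' t') x y t
        = σ * x * py (py u) x y t := by
      show deriv (fun y' => σ * x * py u x y' t) y = σ * x * py (py u) x y t
      rw [deriv_const_mul_field]
      rfl
    -- HasDerivAt facts in x
    have hd0 := h0.hd x y t
    have hd1 := h1.hd x y t
    have hd2 := h2.hd x y t
    have hd3 := h3.hd x y t
    have hd4 := h4.hd x y t
    have hd5 := h5.hd x y t
    -- derivative of F in x
    have hF : HasDerivAt (fun x' => Fflux c e f g u x' y t)
        (c * px (px (px (px u))) x y t + px (px (px (px (px (px u))))) x y t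
          + (e * px u x y t * px (px (px u)) x y t
              + e * u x y t * px (px (px (px u))) x y t)
          + (f * px (px u) x y t * px (px u) x y t
              + f * px u x y t * px (px (px u)) x y t)
          + (g * (2 * u x y t ^ 1 * px u x y t) * px u x y t
              + g * u x y t ^ 2 * px (px u) x y t)) x := by
      have := ((((hd3.const_mul c).add hd5).add
        (((hd0.const_mul e).mul hd3))).add
        (((hd1.const_mul f).mul hd2))).add
        (((hd0.pow 2).const_mul g).mul hd1)
      exact this
    -- derivative of J in x
    have hJ : HasDerivAt (fun x' => Jpot c e f g u x' y t)
        (-(c * px (px (px u)) x y t) - px (px (px (px (px u)))) x y t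
          - (e * px u x y t * px (px u) x y t
              + e * u x y t * px (px (px u)) x y t)
          + (e - f) / 2 * (2 * px u x y t ^ 1 * px (px u) x y t)
          - g / 3 * (3 * u x y t ^ 2 * px u x y t)) x := by
      have := (((((hd2.const_mul c).neg).sub hd4).sub
        ((hd0.const_mul e).mul hd2)).add
        ((hd1.pow 2).const_mul ((e - f) / 2))).sub
        ((hd0.pow 3).const_mul (g / 3))
      exact this
    -- derivative of x * F + J in x
    have hX : px (fun x' y' t' =>
        x' * Fflux c e f g u x' y' t' + Jpot c e f g u x' y' t') x y t
        = (1 * Fflux c e f g u x y t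
            + x * (c * px (px (px (px u))) x y t + px (px (px (px (px (px u))))) x y t
              + (e * px u x y t * px (px (px u)) x y t
                  + e * u x y t * px (px (px (px u))) x y t)
              + (f * px (px u) x y t * px (px u) x y t
                  + f * px u x y t * px (px (px u)) x y t)
              + (g * (2 * u x y t ^ 1 * px u x y t) * px u x y t
                  + g * u x y t ^ 2 * px (px u) x y t)))
          + (-(c * px (px (px u)) x y t) - px (px (px (px (px u)))) x y t
            - (e * px u x y t * px (px u) x y t
                + e * u x y t * px (px (px u)) x y t)
            + (e - f) / 2 * (2 * px u x y t ^ 1 * px (px u) x y t)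
            - g / 3 * (3 * u x y t ^ 2 * px u x y t)) := by
      exact (((hasDerivAt_id x).mul hF).add hJ).deriv
    rw [ht, hy, hX]
    simp only [Fflux, Delta]
    ring
  refine ⟨key, fun x y t hΔ => ?_⟩
  rw [key x y t, hΔ, mul_zero]
end
end

section
/- For Q₄ = xt - y²/(2σ), the triple T = (xt - y²/(2σ)) u_x, X = t(x F + J) - x u - (y²/(2σ)) F, Y = σ x t u_y - (y²/2) u_y + y u satisfies ∂_t T + ∂_x X + ∂_y Y = (xt - y²/(2σ)) Δ identically for all smooth u(x,y,t). -/
noncomputable section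

namespace Q4aux

theorem hasDerivAt_px {u : ℝ → ℝ → ℝ → ℝ} (hu : Smooth3 u) (x y t : ℝ) :
    HasDerivAt (fun x' => u x' y t) (px u x y t) x := by
  have h1 : DifferentiableAt ℝ (fun p : ℝ × ℝ × ℝ => u p.1 p.2.1 p.2.2) (x, y, t) :=
    (hu.differentiable (by simp)).differentiableAt
  have h2 : DifferentiableAt ℝ (fun x' : ℝ => ((x', y, t) : ℝ × ℝ × ℝ)) x := by fun_prop
  exact (h1.comp x h2).hasDerivAt

theorem hasDerivAt_py {u : ℝ → ℝ → ℝ → ℝ} (hu : Smooth3 u) (x y t : ℝ) :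
    HasDerivAt (fun y' => u x y' t) (py u x y t) y := by
  have h1 : DifferentiableAt ℝ (fun p : ℝ × ℝ × ℝ => u p.1 p.2.1 p.2.2) (x, y, t) :=
    (hu.differentiable (by simp)).differentiableAt
  have h2 : DifferentiableAt ℝ (fun y' : ℝ => ((x, y', t) : ℝ × ℝ × ℝ)) y := by fun_prop
  exact (h1.comp y h2).hasDerivAt

theorem hasDerivAt_pt {u : ℝ → ℝ → ℝ → ℝ} (hu : Smooth3 u) (x y t : ℝ) :
    HasDerivAt (fun t' => u x y t') (pt u x y t) t := by
  have h1 : DifferentiableAt ℝ (fun p : ℝ × ℝ × ℝ => u p.1 p.2.1 p.2.2) (x, y, t) :=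
    (hu.differentiable (by simp)).differentiableAt
  have h2 : DifferentiableAt ℝ (fun t' : ℝ => ((x, y, t') : ℝ × ℝ × ℝ)) t := by fun_prop
  exact (h1.comp t h2).hasDerivAt

theorem smooth_px {u : ℝ → ℝ → ℝ → ℝ} (hu : Smooth3 u) : Smooth3 (px u) := by
  have h : (fun p : ℝ × ℝ × ℝ => px u p.1 p.2.1 p.2.2)
      = fun p => fderiv ℝ (fun q : ℝ × ℝ × ℝ => u q.1 q.2.1 q.2.2) p ((1, 0, 0) : ℝ × ℝ × ℝ) := by
    funext p
    obtain ⟨a, b, c⟩ := p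
    have hline : HasDerivAt (fun x' : ℝ => ((x', b, c) : ℝ × ℝ × ℝ)) ((1, 0, 0) : ℝ × ℝ × ℝ) a :=
      (hasDerivAt_id a).prodMk (hasDerivAt_const a (b, c))
    have hF : HasFDerivAt (fun q : ℝ × ℝ × ℝ => u q.1 q.2.1 q.2.2)
        (fderiv ℝ (fun q : ℝ × ℝ × ℝ => u q.1 q.2.1 q.2.2) (a, b, c)) (a, b, c) :=
      ((hu.differentiable (by simp)).differentiableAt).hasFDerivAt
    have hc : HasDerivAt (fun x' : ℝ => u x' b c)
        ((fderiv ℝ (fun q : ℝ × ℝ × ℝ => u q.1 q.2.1 q.2.2) (a, b, c)) ((1, 0, 0) : ℝ × ℝ × ℝ)) a := by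
      simpa [Function.comp_def] using hF.comp_hasDerivAt a hline
    exact hc.deriv
  show ContDiff ℝ (⊤ : ℕ∞) _
  rw [h]
  exact (hu.fderiv_right (by simp)).clm_apply contDiff_const

theorem smooth_py {u : ℝ → ℝ → ℝ → ℝ} (hu : Smooth3 u) : Smooth3 (py u) := by
  have h : (fun p : ℝ × ℝ × ℝ => py u p.1 p.2.1 p.2.2)
      = fun p => fderiv ℝ (fun q : ℝ × ℝ × ℝ => u q.1 q.2.1 q.2.2) p ((0, 1, 0) : ℝ × ℝ × ℝ) := by
    funext p
    obtain ⟨a, b, c⟩ := p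
    have hline : HasDerivAt (fun y' : ℝ => ((a, y', c) : ℝ × ℝ × ℝ)) ((0, 1, 0) : ℝ × ℝ × ℝ) b :=
      (hasDerivAt_const b a).prodMk ((hasDerivAt_id b).prodMk (hasDerivAt_const b c))
    have hF : HasFDerivAt (fun q : ℝ × ℝ × ℝ => u q.1 q.2.1 q.2.2)
        (fderiv ℝ (fun q : ℝ × ℝ × ℝ => u q.1 q.2.1 q.2.2) (a, b, c)) (a, b, c) :=
      ((hu.differentiable (by simp)).differentiableAt).hasFDerivAt
    have hc : HasDerivAt (fun y' : ℝ => u a y' c)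
        ((fderiv ℝ (fun q : ℝ × ℝ × ℝ => u q.1 q.2.1 q.2.2) (a, b, c)) ((0, 1, 0) : ℝ × ℝ × ℝ)) b := by
      simpa [Function.comp_def] using hF.comp_hasDerivAt b hline
    exact hc.deriv
  show ContDiff ℝ (⊤ : ℕ∞) _
  rw [h]
  exact (hu.fderiv_right (by simp)).clm_apply contDiff_const

end Q4aux

open Q4aux in
/-- conserved vector (3.15) for the multiplier `Q₄ = xt - y²/(2σ)`. -/
theorem conserved_vector_Q4
    (c e f g σ : ℝ) (hσ : σ ≠ 0) (u : ℝ → ℝ → ℝ → ℝ) (hu : Smooth3 u) :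
    ∀ x y t : ℝ,
      pt (fun x' y' t' => (x' * t' - y' ^ 2 / (2 * σ)) * px u x' y' t') x y t
        + px (fun x' y' t' =>
            t' * (x' * Fflux c e f g u x' y' t' + Jpot c e f g u x' y' t')
              - x' * u x' y' t'
              - (y' ^ 2 / (2 * σ)) * Fflux c e f g u x' y' t') x y t
        + py (fun x' y' t' =>
            σ * x' * t' * py u x' y' t' - (y' ^ 2 / 2) * py u x' y' t'
              + y' * u x' y' t') x y t
      = (x * t - y ^ 2 / (2 * σ)) * Delta c 1 e f g σ u x y t := by
  intro x y t
  have s1 := smooth_px hu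
  have s2 := smooth_px s1
  have s3 := smooth_px s2
  have s4 := smooth_px s3
  have s5 := smooth_px s4
  have sy := smooth_py hu
  have hx0 := hasDerivAt_px hu x y t
  have hx1 := hasDerivAt_px s1 x y t
  have hx2 := hasDerivAt_px s2 x y t
  have hx3 := hasDerivAt_px s3 x y t
  have hx4 := hasDerivAt_px s4 x y t
  have hx5 := hasDerivAt_px s5 x y t
  have hy0 := hasDerivAt_py hu x y t
  have hy1 := hasDerivAt_py sy x y t
  have htx := hasDerivAt_pt s1 x y t
  -- T-component
  have hT := (((hasDerivAt_id' t).const_mul x).sub_const (y ^ 2 / (2 * σ))).mul htx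
  -- F and J as functions of x'
  have hF := ((((hx3.const_mul c).add hx5).add ((hx0.const_mul e).mul hx3)).add
      ((hx1.const_mul f).mul hx2)).add (((hx0.pow 2).const_mul g).mul hx1)
  have hJ := (((((hx2.const_mul c).neg).sub hx4).sub ((hx0.const_mul e).mul hx2)).add
      ((hx1.pow 2).const_mul ((e - f) / 2))).sub ((hx0.pow 3).const_mul (g / 3))
  have hX := (((((hasDerivAt_id' x).mul hF).add hJ).const_mul t).sub
      ((hasDerivAt_id' x).mul hx0)).sub (hF.const_mul (y ^ 2 / (2 * σ)))
  have hY := ((hy1.const_mul (σ * x * t)).sub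
      (((hasDerivAt_pow 2 y).div_const 2).mul hy1)).add ((hasDerivAt_id' y).mul hy0)
  show deriv (fun t' => (x * t' - y ^ 2 / (2 * σ)) * px u x y t') t
      + deriv (fun x' =>
          t * (x' * (c * px (px (px u)) x' y t + px (px (px (px (px u)))) x' y t
                + e * u x' y t * px (px (px u)) x' y t
                + f * px u x' y t * px (px u) x' y t
                + g * u x' y t ^ 2 * px u x' y t)
              + (-(c * px (px u) x' y t) - px (px (px (px u))) x' y t
                - e * u x' y t * px (px u) x' y t
                + (e - f) / 2 * px u x' y t ^ 2
                - g / 3 * u x' y t ^ 3))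
            - x' * u x' y t
            - y ^ 2 / (2 * σ) * (c * px (px (px u)) x' y t + px (px (px (px (px u)))) x' y t
                + e * u x' y t * px (px (px u)) x' y t
                + f * px u x' y t * px (px u) x' y t
                + g * u x' y t ^ 2 * px u x' y t)) x
      + deriv (fun y' =>
          σ * x * t * py u x y' t - y' ^ 2 / 2 * py u x y' t + y' * u x y' t) y
      = (x * t - y ^ 2 / (2 * σ)) * Delta c 1 e f g σ u x y t
  simp only [Pi.mul_def, Pi.add_def, Pi.sub_def, Pi.neg_def, Pi.pow_def] at hT hX hY
  rw [hT.deriv, hX.deriv, hY.deriv]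
  simp only [Delta]
  field_simp
  ring
end
end
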